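/- Let A be a residuated lattice, F a filter of A, and C a ∨-closed subset of A. Then ω_F(C) = {a ∈ A | c ∨ a ∈ F for some c ∈ C} is a filter of A. -/

import Mathlib

/-! Since `⊙` is a left adjoint it distributes over `∨`, and `x ⊙ y ≤ x` because `1 = ⊤`;
together these give `(e ∨ a) ⊙ (e ∨ b) ≤ e ∨ a ⊙ b`. So from `c ∨ a, d ∨ b ∈ F` we get
`(c ∨ d) ∨ a ⊙ b ∈ F`, and `c ∨ d ∈ C` witnesses `a ⊙ b ∈ ω_F(C)`. -/

class ResiduatedLattice (α : Type*) extends Lattice α, CommMonoid α, BoundedOrder α where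
  rimp : α → α → α
  one_eq_top : (1 : α) = ⊤
  adjunction : ∀ x y z : α, x * y ≤ z ↔ x ≤ rimp y z

variable {α : Type*} [ResiduatedLattice α]

/-- A filter of a residuated lattice: nonempty, closed under `⊙` and upward closed. -/
def IsFilter (F : Set α) : Prop :=
  F.Nonempty ∧ (∀ x ∈ F, ∀ y ∈ F, x * y ∈ F) ∧ ∀ x ∈ F, ∀ y : α, x ≤ y → y ∈ F

/-- A prime filter: a proper filter such that `x ⊔ y ∈ P` implies `x ∈ P` or `y ∈ P`. -/
def IsPrimeFilter (P : Set α) : Prop :=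
  IsFilter P ∧ P ≠ Set.univ ∧ ∀ x y : α, x ⊔ y ∈ P → x ∈ P ∨ y ∈ P

/-- A `∨`-closed subset: nonempty and closed under join. -/
def IsJoinClosed (C : Set α) : Prop :=
  C.Nonempty ∧ ∀ x ∈ C, ∀ y ∈ C, x ⊔ y ∈ C

/-- The filter generated by a set. -/
def filterGen (X : Set α) : Set α := ⋂₀ {G : Set α | IsFilter G ∧ X ⊆ G}

/-- An `X`-minimal prime filter: prime, contains `X`, minimal among primes containing `X`. -/
def IsMinPrimeOver (X P : Set α) : Prop :=
  IsPrimeFilter P ∧ X ⊆ P ∧ ∀ Q : Set α, IsPrimeFilter Q → X ⊆ Q → Q ⊆ P → Q = P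

/-- `ω_F(X) = {a | x ∨ a ∈ F for some x ∈ X}`. -/
def omegaF (F X : Set α) : Set α := {a : α | ∃ x ∈ X, x ⊔ a ∈ F}

/-- The coannihilator `(F : x) = {a | x ∨ a ∈ F}`. -/
def coann (F : Set α) (x : α) : Set α := {a : α | x ⊔ a ∈ F}

/-- `D_F(H) = {a | x ∨ a ∈ F for some x ∉ H}`, the set of `F`-divisors of `H`. -/
def divisorsF (F H : Set α) : Set α := {a : α | ∃ x ∉ H, x ⊔ a ∈ F}

/-- A lattice ideal: nonempty, closed under join and downward closed. -/
def IsLatticeIdeal (I : Set α) : Prop :=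
  I.Nonempty ∧ (∀ x ∈ I, ∀ y ∈ I, x ⊔ y ∈ I) ∧ ∀ x y : α, x ≤ y → y ∈ I → x ∈ I

/-- The lattice ideal generated by a set. -/
def idealGen (X : Set α) : Set α := ⋂₀ {I : Set α | IsLatticeIdeal I ∧ X ⊆ I}

/-- An `ω_F`-filter: a filter of the form `ω_F(I)` for some lattice ideal `I`. -/
def IsOmegaFilter (F H : Set α) : Prop :=
  IsFilter H ∧ ∃ I : Set α, IsLatticeIdeal I ∧ H = omegaF F I

namespace ResiduatedLattice

theorem mul_le_iff_le_rimp {x y z : α} : x * y ≤ z ↔ x ≤ rimp y z := adjunction x y z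

instance : IsOrderedMonoid α where
  mul_le_mul_left _ _ hab _ :=
    mul_le_iff_le_rimp.mpr (hab.trans (mul_le_iff_le_rimp.mp le_rfl))

theorem le_one (x : α) : x ≤ 1 := one_eq_top (α := α) ▸ le_top

theorem mul_le_left (x y : α) : x * y ≤ x := mul_le_of_le_one_right' (le_one y)

theorem mul_le_right (x y : α) : x * y ≤ y := mul_le_of_le_one_left' (le_one x)

theorem sup_mul_le (x y z : α) : (x ⊔ y) * z ≤ x * z ⊔ y * z :=
  mul_le_iff_le_rimp.mpr <| sup_le (mul_le_iff_le_rimp.mp le_sup_left)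
    (mul_le_iff_le_rimp.mp le_sup_right)

theorem mul_sup_le (x y z : α) : x * (y ⊔ z) ≤ x * y ⊔ x * z := by
  simpa only [mul_comm x] using sup_mul_le y z x

theorem sup_mul_sup_le (e a b : α) : (e ⊔ a) * (e ⊔ b) ≤ e ⊔ a * b :=
  calc (e ⊔ a) * (e ⊔ b) ≤ e * (e ⊔ b) ⊔ a * (e ⊔ b) := sup_mul_le _ _ _
    _ ≤ e ⊔ (a * e ⊔ a * b) := sup_le_sup (mul_le_left _ _) (mul_sup_le _ _ _)
    _ ≤ e ⊔ a * b :=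
      sup_le le_sup_left (sup_le ((mul_le_right a e).trans le_sup_left) le_sup_right)

end ResiduatedLattice

open ResiduatedLattice

theorem IsFilter.top_mem {F : Set α} (hF : IsFilter F) : ⊤ ∈ F :=
  hF.1.elim fun _ hx ↦ hF.2.2 _ hx _ le_top

theorem IsFilter.sup_mul_mem {F : Set α} (hF : IsFilter F) {c d a b : α}
    (ha : c ⊔ a ∈ F) (hb : d ⊔ b ∈ F) : (c ⊔ d) ⊔ a * b ∈ F :=
  hF.2.2 _ (hF.2.1 _ ha _ hb) _ <|
    (mul_le_mul' (sup_le_sup_right le_sup_left a) (sup_le_sup_right le_sup_right b)).trans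
      (sup_mul_sup_le _ a b)

/-- Proposition 3.3: for a filter `F` and a `∨`-closed set `C`,
`ω_F(C)` is a filter. -/
theorem stmt_4 (F C : Set α) (hF : IsFilter F) (hC : IsJoinClosed C) :
    IsFilter (omegaF F C) := by
  obtain ⟨⟨c₀, hc₀⟩, hjoin⟩ := hC
  refine ⟨⟨⊤, c₀, hc₀, by simpa using hF.top_mem⟩, ?_, ?_⟩
  · rintro a ⟨c, hc, hca⟩ b ⟨d, hd, hdb⟩
    exact ⟨c ⊔ d, hjoin c hc d hd, hF.sup_mul_mem hca hdb⟩
  · rintro a ⟨c, hc, hca⟩ b hab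
    exact ⟨c, hc, hF.2.2 _ hca _ (sup_le_sup_left hab c)⟩
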